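/- arXiv:2102.03864 — 3 statements merged into one kernel-verified Lean document; each statement's English description precedes it below -/
import Mathlib

section
/- Let p ∈ [1,∞) and let I be a nonempty set. If A and B are increasable doubly substochastic operators on ℓ^p(I), then the composition AB is an increasable doubly substochastic operator on ℓ^p(I). -/
open scoped ENNReal BigOperators

noncomputable section

/-- ℓᵖ(I) with real scalars. -/
abbrev Lp (I : Type*) (p : ℝ≥0∞) := lp (fun _ : I => ℝ) p

/-- The standard basis vector `e_j` of `ℓᵖ(I)`. -/
def stdVec {I : Type*} (p : ℝ≥0∞) (j : I) : Lp I p :=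
  haveI := Classical.decEq I
  lp.single p j 1

/-- A bounded operator on ℓᵖ(I) is positive if it maps the positive cone into itself. -/
def IsPos {I : Type*} {p : ℝ≥0∞} [Fact (1 ≤ p)] (A : Lp I p →L[ℝ] Lp I p) : Prop :=
  ∀ f : Lp I p, (∀ i, 0 ≤ f i) → ∀ i, 0 ≤ A f i

/-- Doubly stochastic operator on ℓᵖ(I). -/
def DoublyStochastic {I : Type*} {p : ℝ≥0∞} [Fact (1 ≤ p)]
    (A : Lp I p →L[ℝ] Lp I p) : Prop :=
  IsPos A ∧ (∀ i : I, HasSum (fun j : I => A (stdVec p j) i) 1)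
          ∧ (∀ j : I, HasSum (fun i : I => A (stdVec p j) i) 1)

/-- Doubly substochastic operator on ℓᵖ(I) (finite partial sums formulation). -/
def DoublySubstochastic {I : Type*} {p : ℝ≥0∞} [Fact (1 ≤ p)]
    (A : Lp I p →L[ℝ] Lp I p) : Prop :=
  IsPos A ∧ (∀ i : I, ∀ s : Finset I, ∑ j ∈ s, A (stdVec p j) i ≤ 1)
          ∧ (∀ j : I, ∀ s : Finset I, ∑ i ∈ s, A (stdVec p j) i ≤ 1)

/-- Increasable doubly substochastic operator on ℓᵖ(I). -/
def IncreasableDsS {I : Type*} {p : ℝ≥0∞} [Fact (1 ≤ p)]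
    (A : Lp I p →L[ℝ] Lp I p) : Prop :=
  IsPos A ∧ ∃ A₁ : Lp I p →L[ℝ] Lp I p, DoublyStochastic A₁ ∧
    ∀ i j : I, A (stdVec p j) i ≤ A₁ (stdVec p j) i

/-- Majorization: `f ≺ g`. -/
def Maj {I : Type*} {p : ℝ≥0∞} [Fact (1 ≤ p)] (f g : Lp I p) : Prop :=
  ∃ D : Lp I p →L[ℝ] Lp I p, DoublyStochastic D ∧ f = D g

/-- Weak majorization: `f ≺_w g`. -/
def MajW {I : Type*} {p : ℝ≥0∞} [Fact (1 ≤ p)] (f g : Lp I p) : Prop :=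
  ∃ D : Lp I p →L[ℝ] Lp I p, DoublySubstochastic D ∧ f = D g

/-- Submajorization: `f ≺_s g`. -/
def MajS {I : Type*} {p : ℝ≥0∞} [Fact (1 ≤ p)] (f g : Lp I p) : Prop :=
  ∃ D : Lp I p →L[ℝ] Lp I p, IncreasableDsS D ∧ f = D g

/-- Permutation operator on ℓᵖ(I). -/
def IsPermutationOp {I : Type*} {p : ℝ≥0∞} [Fact (1 ≤ p)]
    (P : Lp I p →L[ℝ] Lp I p) : Prop :=
  ∃ θ : I ≃ I, ∀ j : I, P (stdVec p j) = stdVec p (θ j)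

/-- `P` is the operator `P_θ` associated with the injection `θ : I → I`,
i.e. `P f = ∑_{k ∈ I} f(k) e_{θ(k)}`. -/
def IsPTheta {I : Type*} {p : ℝ≥0∞} [Fact (1 ≤ p)] (θ : I → I)
    (P : Lp I p →L[ℝ] Lp I p) : Prop :=
  (∀ f : Lp I p, ∀ k : I, P f (θ k) = f k) ∧
  (∀ f : Lp I p, ∀ i : I, i ∉ Set.range θ → P f i = 0)

/-- `T` preserves weak majorization on the positive cone. -/
def PreservesMajW {I : Type*} {p : ℝ≥0∞} [Fact (1 ≤ p)]
    (T : Lp I p →L[ℝ] Lp I p) : Prop :=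
  ∀ f g : Lp I p, (∀ i, 0 ≤ f i) → (∀ i, 0 ≤ g i) → MajW f g → MajW (T f) (T g)

/-- `T` preserves submajorization on the positive cone. -/
def PreservesMajS {I : Type*} {p : ℝ≥0∞} [Fact (1 ≤ p)]
    (T : Lp I p →L[ℝ] Lp I p) : Prop :=
  ∀ f g : Lp I p, (∀ i, 0 ≤ f i) → (∀ i, 0 ≤ g i) → MajS f g → MajS (T f) (T g)

end


section auxLemmas
variable {I : Type*} {p : ℝ≥0∞} [Fact (1 ≤ p)]

omit [Fact (1 ≤ p)] in
lemma stdVec_nonneg' (j i : I) : 0 ≤ stdVec p j i := by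
  letI := Classical.decEq I
  unfold stdVec
  rcases eq_or_ne i j with h | h
  · subst h; rw [lp.single_apply_self]; norm_num
  · rw [lp.single_apply_ne p j _ h]

omit [Fact (1 ≤ p)] in
lemma single_eq_smul_stdVec' (k : I) (c : ℝ) :
    letI := Classical.decEq I
    lp.single p k c = c • stdVec p k := by
  letI := Classical.decEq I
  unfold stdVec
  rw [← lp.single_smul, smul_eq_mul, mul_one]

noncomputable def evalCLM' (i : I) : Lp I p →L[ℝ] ℝ :=
  LinearMap.mkContinuous
    { toFun := fun f => f i
      map_add' := fun _ _ => rfl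
      map_smul' := fun _ _ => rfl }
    1 (fun f => by
      rw [one_mul]
      exact lp.norm_apply_le_norm (zero_lt_one.trans_le (Fact.out : 1 ≤ p)).ne' f i)

lemma hasSum_coord' (hp : p ≠ ∞) (T : Lp I p →L[ℝ] Lp I p) (f : Lp I p) (i : I) :
    HasSum (fun k => f k * T (stdVec p k) i) (T f i) := by
  letI := Classical.decEq I
  have h1 : HasSum (fun k : I => lp.single p k (f k)) f := lp.hasSum_single hp f
  have h2 := h1.mapL ((evalCLM' i).comp T)
  have h3 : (fun k => ((evalCLM' i).comp T) (lp.single p k (f k)))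
      = fun k => f k * T (stdVec p k) i := by
    funext k
    rw [ContinuousLinearMap.comp_apply, single_eq_smul_stdVec', map_smul, map_smul,
      smul_eq_mul]
    rfl
  rw [h3] at h2
  exact h2

lemma hasSum_prod_of_cols' {β γ : Type*} {f : β × γ → ℝ} (hnn : ∀ q, 0 ≤ f q)
    {h : γ → ℝ} {S : ℝ} (hcol : ∀ c, HasSum (fun b => f (b, c)) (h c))
    (hS : HasSum h S) : HasSum f S := by
  set g : γ × β → ℝ := fun q => f (q.2, q.1) with hg_def
  have hg : Summable g := by
    refine (summable_prod_of_nonneg (fun q => hnn _)).2 ⟨fun c => (hcol c).summable, ?_⟩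
    exact hS.summable.congr fun c => ((hcol c).tsum_eq).symm
  have h1 : HasSum g S := by
    have hgs := hg.hasSum
    have h2 : HasSum h (∑' q, g q) := hgs.prod_fiberwise fun c => hcol c
    rwa [h2.unique hS] at hgs
  exact (((Equiv.prodComm β γ).hasSum_iff (f := g) (a := S)).2 h1).congr_fun fun q => rfl

lemma ds_comp' (hp : p ≠ ∞) {A₁ B₁ : Lp I p →L[ℝ] Lp I p}
    (hA₁ : DoublyStochastic A₁) (hB₁ : DoublyStochastic B₁) :
    DoublyStochastic (A₁.comp B₁) := by
  obtain ⟨hApos, hArow, hAcol⟩ := hA₁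
  obtain ⟨hBpos, hBrow, hBcol⟩ := hB₁
  have hAnn : ∀ k i : I, 0 ≤ A₁ (stdVec p k) i :=
    fun k i => hApos _ (fun m => stdVec_nonneg' k m) i
  have hBnn : ∀ k i : I, 0 ≤ B₁ (stdVec p k) i :=
    fun k i => hBpos _ (fun m => stdVec_nonneg' k m) i
  refine ⟨fun f hf i => hApos _ (fun m => hBpos f hf m) i, ?_, ?_⟩
  · intro i
    have hf : HasSum (fun q : I × I => B₁ (stdVec p q.1) q.2 * A₁ (stdVec p q.2) i) 1 := by
      refine hasSum_prod_of_cols' (fun q => mul_nonneg (hBnn _ _) (hAnn _ _))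
        (h := fun k => A₁ (stdVec p k) i) (fun k => ?_) (hArow i)
      simpa using (hBrow k).mul_right (A₁ (stdVec p k) i)
    have := hf.prod_fiberwise (fun j => hasSum_coord' hp A₁ (B₁ (stdVec p j)) i)
    exact this.congr_fun fun j => rfl
  · intro j
    have hf : HasSum (fun q : I × I => B₁ (stdVec p j) q.2 * A₁ (stdVec p q.2) q.1) 1 := by
      refine hasSum_prod_of_cols' (fun q => mul_nonneg (hBnn _ _) (hAnn _ _))
        (h := fun k => B₁ (stdVec p j) k) (fun k => ?_) (hBcol j)
      simpa using (hAcol k).mul_left (B₁ (stdVec p j) k)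
    have := hf.prod_fiberwise (fun i => hasSum_coord' hp A₁ (B₁ (stdVec p j)) i)
    exact this.congr_fun fun i => rfl

end auxLemmas

theorem stmt_1 {I : Type*} [Nonempty I] (p : ℝ≥0∞) [Fact (1 ≤ p)] (hp : p ≠ ∞)
    (A B : Lp I p →L[ℝ] Lp I p) (hA : IncreasableDsS A) (hB : IncreasableDsS B) :
    IncreasableDsS (A.comp B) := by
  obtain ⟨hApos, A₁, hA₁, hAle⟩ := hA
  obtain ⟨hBpos, B₁, hB₁, hBle⟩ := hB
  have hAnn : ∀ k i : I, 0 ≤ A (stdVec p k) i :=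
    fun k i => hApos _ (fun m => stdVec_nonneg' k m) i
  have hBnn : ∀ k i : I, 0 ≤ B (stdVec p k) i :=
    fun k i => hBpos _ (fun m => stdVec_nonneg' k m) i
  have hA₁nn : ∀ k i : I, 0 ≤ A₁ (stdVec p k) i :=
    fun k i => hA₁.1 _ (fun m => stdVec_nonneg' k m) i
  have hB₁nn : ∀ k i : I, 0 ≤ B₁ (stdVec p k) i :=
    fun k i => hB₁.1 _ (fun m => stdVec_nonneg' k m) i
  refine ⟨fun f hf i => hApos _ (fun m => hBpos f hf m) i,
    A₁.comp B₁, ds_comp' hp hA₁ hB₁, fun i j => ?_⟩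
  have h1 : HasSum (fun k => B (stdVec p j) k * A (stdVec p k) i)
      ((A.comp B) (stdVec p j) i) := hasSum_coord' hp A (B (stdVec p j)) i
  have h2 : HasSum (fun k => B₁ (stdVec p j) k * A₁ (stdVec p k) i)
      ((A₁.comp B₁) (stdVec p j) i) := hasSum_coord' hp A₁ (B₁ (stdVec p j)) i
  exact hasSum_le (fun k => mul_le_mul (hBle k j) (hAle i k) (hAnn k i) (hB₁nn j k)) h1 h2
end

section
/- Let p ∈ [1,∞), let I be a nonempty set, let D be an increasable doubly substochastic operator on ℓ^p(I), let I₀ be an at most countable set, and let {θ_k : k ∈ I₀} be a family of injective maps θ_k : I → I with pairwise disjoint images (θ_i(I) ∩ θ_j(I) = ∅ for i ≠ j). Then there exists an increasable doubly substochastic operator S on ℓ^p(I) such that P_{θ_k} ∘ D = S ∘ P_{θ_k} for every k ∈ I₀. -/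
open scoped ENNReal BigOperators

/-!
Merge the injections into one injection `Θ : I₀ × I → I`, `Θ (k, j) = θ_k j`, so that `I` splits
into the blocks `Θ({k} × I)` and the rest. Let `S` act on every block as a copy of `D`
transported along `θ_k`, and as the identity off the blocks; then `P_{θ_k} D = S P_{θ_k}`.
Applied to a doubly stochastic majorant `D₁` of `D`, the same construction is doubly stochastic
(each of its rows and columns is a row or column of `D₁` reindexed along some `θ_k`, or a unit
vector) and dominates `S` entrywise. On the blocks, `S` is bounded by
`∑ₖ ‖D (f ∘ θ_k)‖ᵖ ≤ ‖D‖ᵖ ∑ₖ ‖f ∘ θ_k‖ᵖ ≤ ‖D‖ᵖ ‖f‖ᵖ`.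
-/

open Function Set

noncomputable section

section StdVec

variable {I : Type*} (p : ℝ≥0∞)

theorem stdVec_apply_self (j : I) : stdVec p j j = 1 := by
  simp [stdVec]

theorem stdVec_apply_of_ne {i j : I} (h : i ≠ j) : stdVec p j i = 0 := by
  simp [stdVec, h]

theorem stdVec_apply [DecidableEq I] (j i : I) : stdVec p j i = if i = j then 1 else 0 := by
  split_ifs with h
  · exact h ▸ stdVec_apply_self p j
  · exact stdVec_apply_of_ne p h

end StdVec

namespace Lp

variable {I J K : Type*} {p : ℝ≥0∞}

def coeLM : Lp J p →ₗ[ℝ] J → ℝ where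
  toFun f := f
  map_add' := lp.coeFn_add
  map_smul' := lp.coeFn_smul

@[simp]
theorem coeLM_apply (f : Lp J p) : coeLM f = f := rfl

variable [Fact (1 ≤ p)]

theorem toReal_pos_of_ne_top (hp : p ≠ ∞) : 0 < p.toReal :=
  ENNReal.toReal_pos (zero_lt_one.trans_le Fact.out).ne' hp

def mkCLMOfSumLe (hp : p ≠ ∞) (T : Lp J p →ₗ[ℝ] I → ℝ) (C : ℝ) (hC : 0 ≤ C)
    (hT : ∀ f (s : Finset I), ∑ i ∈ s, ‖T f i‖ ^ p.toReal ≤ (C * ‖f‖) ^ p.toReal) :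
    Lp J p →L[ℝ] Lp I p :=
  LinearMap.mkContinuous
    { toFun f := ⟨T f, memℓp_gen' (hT f)⟩
      map_add' f g := lp.ext (T.map_add f g)
      map_smul' c f := lp.ext (T.map_smul c f) }
    C fun f => lp.norm_le_of_forall_sum_le (toReal_pos_of_ne_top hp) (by positivity) (hT f)

def comap (hp : p ≠ ∞) (σ : J → I) (hσ : Injective σ) : Lp I p →L[ℝ] Lp J p :=
  mkCLMOfSumLe hp (LinearMap.funLeft ℝ ℝ σ ∘ₗ coeLM) 1 zero_le_one fun f s => by
    simpa using lp.sum_rpow_le_norm_rpow (toReal_pos_of_ne_top hp) f (s.map ⟨σ, hσ⟩)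

@[simp]
theorem comap_apply (hp : p ≠ ∞) (σ : J → I) (hσ : Injective σ) (f : Lp I p) (j : J) :
    comap hp σ hσ f j = f (σ j) := rfl

theorem comap_stdVec_self (hp : p ≠ ∞) {σ : J → I} (hσ : Injective σ) (j : J) :
    comap hp σ hσ (stdVec p (σ j)) = stdVec p j := by
  classical
  ext i
  simp [stdVec_apply, hσ.eq_iff]

theorem comap_stdVec_of_notMem (hp : p ≠ ∞) {σ : J → I} (hσ : Injective σ) {i : I}
    (hi : i ∉ range σ) : comap hp σ hσ (stdVec p i) = 0 := by
  classical
  ext j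
  simp only [comap_apply, stdVec_apply, lp.coeFn_zero, Pi.zero_apply, ite_eq_right_iff]
  exact fun h => absurd ⟨j, h⟩ hi

def extendByZero (hp : p ≠ ∞) (σ : J → I) (hσ : Injective σ) : Lp J p →L[ℝ] Lp I p :=
  mkCLMOfSumLe hp (ExtendByZero.linearMap ℝ σ ∘ₗ coeLM) 1 zero_le_one fun f s => by
    classical
    rw [one_mul, ← Finset.sum_preimage σ s hσ.injOn]
    · simp only [LinearMap.comp_apply, ExtendByZero.linearMap_apply, hσ.extend_apply]
      exact lp.sum_rpow_le_norm_rpow (toReal_pos_of_ne_top hp) f _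
    · intro i _ hi
      simp [extend_apply' _ _ _ hi, Real.zero_rpow (toReal_pos_of_ne_top hp).ne']

theorem extendByZero_apply_self (hp : p ≠ ∞) {σ : J → I} (hσ : Injective σ) (f : Lp J p)
    (j : J) : extendByZero hp σ hσ f (σ j) = f j :=
  hσ.extend_apply _ _ j

theorem extendByZero_apply_of_notMem (hp : p ≠ ∞) {σ : J → I} (hσ : Injective σ) (f : Lp J p)
    {i : I} (hi : i ∉ range σ) : extendByZero hp σ hσ f i = 0 :=
  extend_apply' _ _ i hi

theorem sum_norm_rpow_comap_mk_le (hp : p ≠ ∞) (g : Lp (K × I) p) (t : Finset K) :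
    ∑ k ∈ t, ‖comap hp (Prod.mk k) (Prod.mk_right_injective k) g‖ ^ p.toReal
      ≤ ‖g‖ ^ p.toReal := by
  have hp' := toReal_pos_of_ne_top hp
  have hg : Summable fun x => ‖g x‖ ^ p.toReal := (lp.memℓp g).summable hp'
  calc ∑ k ∈ t, ‖comap hp (Prod.mk k) (Prod.mk_right_injective k) g‖ ^ p.toReal
      = ∑ k ∈ t, ∑' j, ‖g (k, j)‖ ^ p.toReal := by simp [lp.norm_rpow_eq_tsum hp']
    _ ≤ ∑' k, ∑' j, ‖g (k, j)‖ ^ p.toReal :=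
        hg.prod.sum_le_tsum t fun k _ => tsum_nonneg fun j => by positivity
    _ = ‖g‖ ^ p.toReal := by rw [← hg.tsum_prod, lp.norm_rpow_eq_tsum hp']

def fiberwiseLM (hp : p ≠ ∞) (A : Lp I p →L[ℝ] Lp I p) : Lp (K × I) p →ₗ[ℝ] K × I → ℝ where
  toFun g x := A (comap hp (Prod.mk x.1) (Prod.mk_right_injective x.1) g) x.2
  map_add' g h := by ext; simp
  map_smul' c g := by ext; simp

theorem sum_norm_rpow_fiberwiseLM_le (hp : p ≠ ∞) (A : Lp I p →L[ℝ] Lp I p) (g : Lp (K × I) p)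
    (s : Finset (K × I)) :
    ∑ x ∈ s, ‖fiberwiseLM hp A g x‖ ^ p.toReal ≤ (‖A‖ * ‖g‖) ^ p.toReal := by
  classical
  have hp' := toReal_pos_of_ne_top hp
  let g' (k : K) : Lp I p := comap hp (Prod.mk k) (Prod.mk_right_injective k) g
  have hs : s ⊆ s.image Prod.fst ×ˢ s.image Prod.snd := fun x hx =>
    Finset.mem_product.2 ⟨Finset.mem_image_of_mem _ hx, Finset.mem_image_of_mem _ hx⟩
  calc ∑ x ∈ s, ‖fiberwiseLM hp A g x‖ ^ p.toReal
      ≤ ∑ x ∈ s.image Prod.fst ×ˢ s.image Prod.snd, ‖fiberwiseLM hp A g x‖ ^ p.toReal :=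
        Finset.sum_le_sum_of_subset_of_nonneg hs fun _ _ _ => by positivity
    _ = ∑ k ∈ s.image Prod.fst, ∑ j ∈ s.image Prod.snd, ‖A (g' k) j‖ ^ p.toReal :=
        Finset.sum_product _ _ _
    _ ≤ ∑ k ∈ s.image Prod.fst, ‖A‖ ^ p.toReal * ‖g' k‖ ^ p.toReal := by
        gcongr with k
        calc _ ≤ ‖A (g' k)‖ ^ p.toReal := lp.sum_rpow_le_norm_rpow hp' _ _
          _ ≤ (‖A‖ * ‖g' k‖) ^ p.toReal := by gcongr; exact A.le_opNorm _
          _ = _ := Real.mul_rpow (norm_nonneg _) (norm_nonneg _)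
    _ ≤ ‖A‖ ^ p.toReal * ‖g‖ ^ p.toReal := by
        rw [← Finset.mul_sum]
        gcongr
        exact sum_norm_rpow_comap_mk_le hp g _
    _ = (‖A‖ * ‖g‖) ^ p.toReal := (Real.mul_rpow (norm_nonneg _) (norm_nonneg _)).symm

def fiberwise (hp : p ≠ ∞) (A : Lp I p →L[ℝ] Lp I p) : Lp (K × I) p →L[ℝ] Lp (K × I) p :=
  mkCLMOfSumLe hp (fiberwiseLM hp A) ‖A‖ (norm_nonneg A) (sum_norm_rpow_fiberwiseLM_le hp A)

end Lp

open Lp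

variable {I K : Type*} {p : ℝ≥0∞} [Fact (1 ≤ p)]

theorem Function.Injective.comp_prodMk {Θ : K × I → I} (hΘ : Injective Θ) (k : K) :
    Injective fun j => Θ (k, j) :=
  hΘ.comp (Prod.mk_right_injective k)

/-- The operator acting as `A` on each block `Θ({k} × I)` and as the identity off `range Θ`. -/
def blockDiag (hp : p ≠ ∞) (Θ : K × I → I) (hΘ : Injective Θ) (A : Lp I p →L[ℝ] Lp I p) :
    Lp I p →L[ℝ] Lp I p :=
  1 + extendByZero hp Θ hΘ ∘L (fiberwise hp A - 1) ∘L comap hp Θ hΘ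

theorem blockDiag_apply_image (hp : p ≠ ∞) {Θ : K × I → I} (hΘ : Injective Θ)
    (A : Lp I p →L[ℝ] Lp I p) (f : Lp I p) (k : K) (i : I) :
    blockDiag hp Θ hΘ A f (Θ (k, i)) =
      A (comap hp (fun j => Θ (k, j)) (hΘ.comp_prodMk k) f) i := by
  simp only [blockDiag, add_apply, one_apply_eq_self, ContinuousLinearMap.comp_apply,
    AddSubgroup.coe_add, PreLp.add_apply, extendByZero_apply_self, sub_apply,
    AddSubgroupClass.coe_sub, PreLp.sub_apply, comap_apply, add_sub_cancel]
  rfl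

theorem blockDiag_apply_of_notMem (hp : p ≠ ∞) {Θ : K × I → I} (hΘ : Injective Θ)
    (A : Lp I p →L[ℝ] Lp I p) (f : Lp I p) {i : I} (hi : i ∉ range Θ) :
    blockDiag hp Θ hΘ A f i = f i := by
  simp [blockDiag, extendByZero_apply_of_notMem hp hΘ _ hi]

theorem blockDiag_stdVec_apply_image_image (hp : p ≠ ∞) {Θ : K × I → I} (hΘ : Injective Θ)
    (A : Lp I p →L[ℝ] Lp I p) (k : K) (i j : I) :
    blockDiag hp Θ hΘ A (stdVec p (Θ (k, j))) (Θ (k, i)) = A (stdVec p j) i := by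
  rw [blockDiag_apply_image, comap_stdVec_self]

theorem blockDiag_stdVec_apply_image_of_notMem (hp : p ≠ ∞) {Θ : K × I → I}
    (hΘ : Injective Θ) (A : Lp I p →L[ℝ] Lp I p) {k : K} {j : I}
    (hj : j ∉ range fun m => Θ (k, m)) (i : I) :
    blockDiag hp Θ hΘ A (stdVec p j) (Θ (k, i)) = 0 := by
  rw [blockDiag_apply_image, comap_stdVec_of_notMem hp _ hj, map_zero, lp.coeFn_zero,
    Pi.zero_apply]

theorem blockDiag_stdVec_image_apply_of_notMem (hp : p ≠ ∞) {Θ : K × I → I}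
    (hΘ : Injective Θ) (A : Lp I p →L[ℝ] Lp I p) (k : K) (j : I) {i : I}
    (hi : i ∉ range fun m => Θ (k, m)) :
    blockDiag hp Θ hΘ A (stdVec p (Θ (k, j))) i = 0 := by
  by_cases hΘi : i ∈ range Θ
  · obtain ⟨⟨l, i⟩, rfl⟩ := hΘi
    have hlk : l ≠ k := by
      rintro rfl
      exact hi ⟨i, rfl⟩
    refine blockDiag_stdVec_apply_image_of_notMem hp hΘ A ?_ i
    rintro ⟨m, hm⟩
    exact hlk (congrArg Prod.fst (hΘ hm))
  · rw [blockDiag_apply_of_notMem hp hΘ A _ hΘi, stdVec_apply_of_ne]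
    rintro rfl
    exact hΘi ⟨_, rfl⟩

theorem blockDiag_stdVec_of_notMem (hp : p ≠ ∞) {Θ : K × I → I} (hΘ : Injective Θ)
    (A : Lp I p →L[ℝ] Lp I p) {j : I} (hj : j ∉ range Θ) :
    blockDiag hp Θ hΘ A (stdVec p j) = stdVec p j := by
  ext i
  by_cases hi : i ∈ range Θ
  · obtain ⟨⟨k, i⟩, rfl⟩ := hi
    rw [blockDiag_stdVec_apply_image_of_notMem hp hΘ A (fun ⟨m, hm⟩ => hj ⟨(k, m), hm⟩),
      stdVec_apply_of_ne]
    rintro rfl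
    exact hj ⟨_, rfl⟩
  · exact blockDiag_apply_of_notMem hp hΘ A _ hi

theorem isPos_blockDiag (hp : p ≠ ∞) {Θ : K × I → I} (hΘ : Injective Θ)
    {A : Lp I p →L[ℝ] Lp I p} (hA : IsPos A) : IsPos (blockDiag hp Θ hΘ A) := by
  intro f hf i
  by_cases hi : i ∈ range Θ
  · obtain ⟨⟨k, i⟩, rfl⟩ := hi
    rw [blockDiag_apply_image]
    exact hA _ (fun j => hf (Θ (k, j))) i
  · rw [blockDiag_apply_of_notMem hp hΘ A f hi]
    exact hf i

theorem doublyStochastic_blockDiag (hp : p ≠ ∞) {Θ : K × I → I} (hΘ : Injective Θ)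
    {A : Lp I p →L[ℝ] Lp I p} (hA : DoublyStochastic A) :
    DoublyStochastic (blockDiag hp Θ hΘ A) := by
  classical
  obtain ⟨hpos, hrow, hcol⟩ := hA
  refine ⟨isPos_blockDiag hp hΘ hpos, fun i => ?_, fun j => ?_⟩
  · by_cases hi : i ∈ range Θ
    · obtain ⟨⟨k, i⟩, rfl⟩ := hi
      rw [← (hΘ.comp_prodMk k).hasSum_iff fun j hj =>
        blockDiag_stdVec_apply_image_of_notMem hp hΘ A hj i]
      simpa [comp_def, blockDiag_stdVec_apply_image_image] using hrow i
    · simpa [blockDiag_apply_of_notMem hp hΘ A _ hi, stdVec_apply, eq_comm]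
        using hasSum_ite_eq i (1 : ℝ)
  · by_cases hj : j ∈ range Θ
    · obtain ⟨⟨k, j⟩, rfl⟩ := hj
      have hvan : ∀ i ∉ range fun m => Θ (k, m),
          blockDiag hp Θ hΘ A (stdVec p (Θ (k, j))) i = 0 := fun i hi =>
        blockDiag_stdVec_image_apply_of_notMem hp hΘ A k j hi
      rw [← (hΘ.comp_prodMk k).hasSum_iff hvan]
      simpa [comp_def, blockDiag_stdVec_apply_image_image] using hcol j
    · simpa [blockDiag_stdVec_of_notMem hp hΘ A hj, stdVec_apply] using hasSum_ite_eq j (1 : ℝ)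

theorem blockDiag_stdVec_apply_mono (hp : p ≠ ∞) {Θ : K × I → I} (hΘ : Injective Θ)
    {A B : Lp I p →L[ℝ] Lp I p} (h : ∀ i j, A (stdVec p j) i ≤ B (stdVec p j) i) (i j : I) :
    blockDiag hp Θ hΘ A (stdVec p j) i ≤ blockDiag hp Θ hΘ B (stdVec p j) i := by
  by_cases hi : i ∈ range Θ
  · obtain ⟨⟨k, i⟩, rfl⟩ := hi
    by_cases hj : j ∈ range fun m => Θ (k, m)
    · obtain ⟨j, rfl⟩ := hj
      simpa only [blockDiag_stdVec_apply_image_image] using h i j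
    · simp only [blockDiag_stdVec_apply_image_of_notMem hp hΘ _ hj, le_rfl]
  · simp only [blockDiag_apply_of_notMem hp hΘ _ _ hi, le_rfl]

theorem increasableDsS_blockDiag (hp : p ≠ ∞) {Θ : K × I → I} (hΘ : Injective Θ)
    {A : Lp I p →L[ℝ] Lp I p} (hA : IncreasableDsS A) : IncreasableDsS (blockDiag hp Θ hΘ A) :=
  let ⟨hpos, _, hA₁, hle⟩ := hA
  ⟨isPos_blockDiag hp hΘ hpos, _, doublyStochastic_blockDiag hp hΘ hA₁,
    blockDiag_stdVec_apply_mono hp hΘ hle⟩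

theorem IsPTheta.comp_eq_blockDiag_comp (hp : p ≠ ∞) {Θ : K × I → I} (hΘ : Injective Θ)
    {k : K} {P : Lp I p →L[ℝ] Lp I p} (hP : IsPTheta (fun j => Θ (k, j)) P)
    (A : Lp I p →L[ℝ] Lp I p) : P.comp A = (blockDiag hp Θ hΘ A).comp P := by
  ext f i
  rw [ContinuousLinearMap.comp_apply, ContinuousLinearMap.comp_apply]
  by_cases hi : i ∈ range Θ
  · obtain ⟨⟨l, i⟩, rfl⟩ := hi
    rw [blockDiag_apply_image]
    rcases eq_or_ne l k with rfl | hlk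
    · have hPf : comap hp _ (hΘ.comp_prodMk l) (P f) = f := by
        ext j
        exact hP.1 f j
      rw [hPf]
      exact hP.1 (A f) i
    · have hnot (m : I) : Θ (l, m) ∉ range fun j => Θ (k, j) := fun ⟨j, hj⟩ =>
        hlk (congrArg Prod.fst (hΘ hj)).symm
      have hPf : comap hp _ (hΘ.comp_prodMk l) (P f) = 0 := by
        ext m
        exact hP.2 f _ (hnot m)
      rw [hPf, map_zero, hP.2 _ _ (hnot i)]
      rfl
  · have hik : i ∉ range fun j => Θ (k, j) := fun ⟨j, hj⟩ => hi ⟨(k, j), hj⟩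
    rw [blockDiag_apply_of_notMem hp hΘ A _ hi, hP.2 _ _ hik, hP.2 _ _ hik]

theorem injective_uncurry_of_disjoint_range {K J I : Type*} {θ : K → J → I}
    (hinj : ∀ k, Injective (θ k)) (hdisj : ∀ k l, k ≠ l → range (θ k) ∩ range (θ l) = ∅) :
    Injective (uncurry θ) := by
  rintro ⟨k, a⟩ ⟨l, b⟩ h
  rcases eq_or_ne k l with rfl | hkl
  · exact congrArg (Prod.mk k) (hinj k h)
  · have : θ k a ∈ range (θ k) ∩ range (θ l) := ⟨⟨a, rfl⟩, ⟨b, h.symm⟩⟩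
    simp [hdisj k l hkl] at this

end

theorem stmt_10_general {I : Type*} (p : ℝ≥0∞) [Fact (1 ≤ p)] (hp : p ≠ ∞)
    (D : Lp I p →L[ℝ] Lp I p) (hD : IncreasableDsS D)
    (I₀ : Set I)
    (θ : I₀ → I → I) (hinj : ∀ k, Function.Injective (θ k))
    (hdisj : ∀ k l : I₀, k ≠ l → Set.range (θ k) ∩ Set.range (θ l) = ∅)
    (P : I₀ → (Lp I p →L[ℝ] Lp I p)) (hP : ∀ k, IsPTheta (θ k) (P k)) :
    ∃ S : Lp I p →L[ℝ] Lp I p, IncreasableDsS S ∧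
      ∀ k : I₀, (P k).comp D = S.comp (P k) := by
  have hΘ := injective_uncurry_of_disjoint_range hinj hdisj
  exact ⟨blockDiag hp _ hΘ D, increasableDsS_blockDiag hp hΘ hD,
    fun k => (hP k).comp_eq_blockDiag_comp hp hΘ D⟩

theorem stmt_10 {I : Type*} [Nonempty I] (p : ℝ≥0∞) [Fact (1 ≤ p)] (hp : p ≠ ∞)
    (D : Lp I p →L[ℝ] Lp I p) (hD : IncreasableDsS D)
    (I₀ : Set I) (hI₀ : I₀.Countable)
    (θ : I₀ → I → I) (hinj : ∀ k, Function.Injective (θ k))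
    (hdisj : ∀ k l : I₀, k ≠ l → Set.range (θ k) ∩ Set.range (θ l) = ∅)
    (P : I₀ → (Lp I p →L[ℝ] Lp I p)) (hP : ∀ k, IsPTheta (θ k) (P k)) :
    ∃ S : Lp I p →L[ℝ] Lp I p, IncreasableDsS S ∧
      ∀ k : I₀, (P k).comp D = S.comp (P k) :=
  stmt_10_general p hp D hD I₀ θ hinj hdisj P hP
end

section
/- Let I be an infinite set. Every bounded linear operator T on ℓ^1(I) that is a linear preserver of submajorization on ℓ^1(I)^+ is a linear preserver of weak majorization on ℓ^1(I)^+; that is, P_s(ℓ^1(I)^+) ⊆ P_w(ℓ^1(I)^+). -/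
/-!
If `f ≺_w g` through a doubly substochastic `D` and `0 ≤ τ < 1`, then `τ • D` is
increasable when `I` is infinite: its row and column deficits are at least `1 - τ > 0`, and the
north-west corner rule, applied blockwise along `I ≃ I × ℕ`, yields a nonnegative matrix with
exactly these deficits as marginals. Hence `τ • f ≺_s g`, so `τ • T f ≺_s T g` and a fortiori
`τ • T f ≺_w T g`. Letting `τ → 1`, the matrices realizing these relations have an entrywise
limit along an ultrafilter, and by dominated convergence in `ℓ¹` that limit realizes
`T f ≺_w T g`.
-/

open scoped ENNReal BigOperators

open Filter Topology

namespace Majorization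

variable {I : Type*}

section Basis

variable {p : ℝ≥0∞}

lemma stdVec_eq_single [DecidableEq I] (j : I) :
    stdVec (I := I) p j = lp.single p j 1 := by
  unfold stdVec
  congr!

lemma stdVec_apply [DecidableEq I] (j k : I) :
    stdVec (I := I) p j k = if k = j then 1 else 0 := by
  rw [stdVec_eq_single, lp.single_apply, Pi.single_apply]

lemma stdVec_nonneg (j k : I) : 0 ≤ stdVec (I := I) p j k := by
  classical
  rw [stdVec_apply]
  split_ifs <;> norm_num

lemma hasSum_mul_apply_stdVec [Fact (1 ≤ p)] (hp : p ≠ ⊤) (D : Lp I p →L[ℝ] Lp I p)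
    (h : Lp I p) (i : I) : HasSum (fun j => h j * D (stdVec p j) i) (D h i) := by
  classical
  have hD := ((lp.evalCLM ℝ _ p i).comp D).hasSum (lp.hasSum_single hp h)
  refine hD.congr_fun fun j => ?_
  have hs : lp.single (E := fun _ : I => ℝ) p j (h j) = h j • lp.single p j 1 := by
    rw [← lp.single_smul, smul_eq_mul, mul_one]
  rw [hs, map_smul, stdVec_eq_single, smul_eq_mul]
  rfl

end Basis

lemma summable_norm (h : Lp I 1) : Summable fun i => ‖h i‖ := by
  simpa using (lp.memℓp h).summable (by norm_num)

lemma norm_eq_tsum_norm (h : Lp I 1) : ‖h‖ = ∑' i, ‖h i‖ := by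
  simpa using lp.norm_eq_tsum_rpow (by norm_num : 0 < (1 : ℝ≥0∞).toReal) h

section MatrixOperator

variable {a : I → I → ℝ}

lemma summable_mul_of_le_one (ha0 : ∀ i j, 0 ≤ a i j) (ha1 : ∀ i j, a i j ≤ 1)
    {v : I → ℝ} (hv : Summable fun j => ‖v j‖) (i : I) :
    Summable fun j => ‖a i j * v j‖ := by
  refine hv.of_nonneg_of_le (fun j => norm_nonneg _) fun j => ?_
  rw [norm_mul, Real.norm_of_nonneg (ha0 i j)]
  exact mul_le_of_le_one_left (norm_nonneg _) (ha1 i j)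

lemma le_one_of_sum_le_one (hcol : ∀ j (s : Finset I), ∑ i ∈ s, a i j ≤ 1) (i j : I) :
    a i j ≤ 1 := by
  simpa using hcol j {i}

lemma sum_tsum_mul_le (ha0 : ∀ i j, 0 ≤ a i j) (hcol : ∀ j (s : Finset I), ∑ i ∈ s, a i j ≤ 1)
    {v : I → ℝ} (hv0 : ∀ j, 0 ≤ v j) (hv : Summable v) (s : Finset I) :
    ∑ i ∈ s, ∑' j, a i j * v j ≤ ∑' j, v j := by
  have hrow : ∀ i, Summable fun j => a i j * v j := fun i =>
    (summable_mul_of_le_one ha0 (le_one_of_sum_le_one hcol)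
      (by simpa [abs_of_nonneg (hv0 _)] using hv) i).of_norm
  rw [← Summable.tsum_finsetSum fun i _ => hrow i]
  refine (summable_sum fun i _ => hrow i).tsum_le_tsum (fun j => ?_) hv
  rw [← Finset.sum_mul]
  exact mul_le_of_le_one_left (hv0 j) (hcol j s)

lemma exists_clm_apply_eq_tsum (ha0 : ∀ i j, 0 ≤ a i j)
    (hcol : ∀ j (s : Finset I), ∑ i ∈ s, a i j ≤ 1) :
    ∃ A : Lp I 1 →L[ℝ] Lp I 1, ∀ h i, A h i = ∑' j, a i j * h j := by
  have hrow (h : Lp I 1) (i : I) : Summable fun j => ‖a i j * h j‖ :=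
    summable_mul_of_le_one ha0 (le_one_of_sum_le_one hcol) (summable_norm h) i
  have hbound (h : Lp I 1) (i : I) : ‖∑' j, a i j * h j‖ ≤ ∑' j, a i j * ‖h j‖ := by
    refine (norm_tsum_le_tsum_norm (hrow h i)).trans_eq (tsum_congr fun j => ?_)
    rw [norm_mul, Real.norm_of_nonneg (ha0 i j)]
  have hsum (h : Lp I 1) : Summable fun i => ∑' j, a i j * ‖h j‖ :=
    summable_of_sum_le (fun i => tsum_nonneg fun j => mul_nonneg (ha0 i j) (norm_nonneg _))
      (sum_tsum_mul_le ha0 hcol (fun j => norm_nonneg _) (summable_norm h))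
  have hnorm (h : Lp I 1) : Summable fun i => ‖∑' j, a i j * h j‖ :=
    (hsum h).of_nonneg_of_le (fun i => norm_nonneg _) (hbound h)
  let A : Lp I 1 →ₗ[ℝ] Lp I 1 :=
    { toFun := fun h => ⟨fun i => ∑' j, a i j * h j, memℓp_gen (by simpa using hnorm h)⟩
      map_add' := fun x y => lp.ext <| funext fun i => by
        simp only [lp.coeFn_add, Pi.add_apply, mul_add]
        exact (hrow x i).of_norm.tsum_add (hrow y i).of_norm
      map_smul' := fun c x => lp.ext <| funext fun i => by
        simp only [lp.coeFn_smul, Pi.smul_apply, smul_eq_mul, RingHom.id_apply, mul_left_comm _ c]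
        exact tsum_mul_left }
  refine ⟨A.mkContinuous 1 fun h => ?_, fun h i => rfl⟩
  rw [one_mul, norm_eq_tsum_norm, norm_eq_tsum_norm]
  calc ∑' i, ‖∑' j, a i j * h j‖ ≤ ∑' i, ∑' j, a i j * ‖h j‖ :=
        (hnorm h).tsum_le_tsum (hbound h) (hsum h)
    _ ≤ ∑' j, ‖h j‖ := (hsum h).tsum_le_of_sum_le
        (sum_tsum_mul_le ha0 hcol (fun j => norm_nonneg _) (summable_norm h))

lemma apply_stdVec_of_apply_eq_tsum {A : Lp I 1 →L[ℝ] Lp I 1}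
    (hA : ∀ h i, A h i = ∑' j, a i j * h j) (i j : I) : A (stdVec 1 j) i = a i j := by
  classical
  simp_rw [hA, stdVec_apply, mul_ite, mul_one, mul_zero]
  exact tsum_ite_eq j (a i)

lemma isPos_of_apply_eq_tsum (ha0 : ∀ i j, 0 ≤ a i j) {A : Lp I 1 →L[ℝ] Lp I 1}
    (hA : ∀ h i, A h i = ∑' j, a i j * h j) : IsPos A := fun h hh i => by
  rw [hA]
  exact tsum_nonneg fun j => mul_nonneg (ha0 i j) (hh j)

end MatrixOperator

section Marginals

lemma max_min_sub_max_min {a b u v : ℝ} (hab : a ≤ b) (huv : u ≤ v) :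
    max a (min b v) - max a (min b u) = max 0 (min b v - max a u) := by
  rcases le_total v a with h | h <;> rcases le_total b u with h' | h' <;>
    simp only [max_def, min_def] <;> split_ifs <;> linarith

/-- The length of `[R n, R (n + 1)] ∩ [C m, C (m + 1)]`. -/
def overlap (R C : ℕ → ℝ) (n m : ℕ) : ℝ :=
  max 0 (min (R (n + 1)) (C (m + 1)) - max (R n) (C m))

lemma overlap_nonneg (R C : ℕ → ℝ) (n m : ℕ) : 0 ≤ overlap R C n m := le_max_left _ _

lemma overlap_comm (R C : ℕ → ℝ) (n m : ℕ) : overlap R C n m = overlap C R m n := by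
  simp only [overlap, min_comm, max_comm]

/-- The intervals `[C m, C (m + 1)]` tile `[C 0, ∞)`, so they cut `[R n, R (n + 1)]` into
pieces of total length `R (n + 1) - R n`. -/
lemma hasSum_overlap {R C : ℕ → ℝ} {n : ℕ} (hR : R n ≤ R (n + 1)) (hC : Monotone C)
    (hC0 : C 0 ≤ R n) (hCtop : Tendsto C atTop atTop) :
    HasSum (overlap R C n) (R (n + 1) - R n) := by
  have hpartial (M : ℕ) :
      ∑ m ∈ Finset.range M, overlap R C n m = max (R n) (min (R (n + 1)) (C M)) - R n := by
    induction M with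
    | zero => simp [min_eq_right (hC0.trans hR), max_eq_left hC0]
    | succ M ih =>
      rw [Finset.sum_range_succ, ih, overlap, ← max_min_sub_max_min hR (hC M.le_succ)]
      ring
  rw [hasSum_iff_tendsto_nat_of_nonneg (overlap_nonneg R C n)]
  refine tendsto_const_nhds.congr' ?_
  filter_upwards [hCtop.eventually_ge_atTop (R (n + 1))] with M hM
  rw [hpartial, min_eq_left hM, max_eq_right hR]

lemma tendsto_sum_range_atTop {δ : ℝ} (hδ : 0 < δ) {r : ℕ → ℝ} (hr : ∀ n, δ ≤ r n) :
    Tendsto (fun N => ∑ n ∈ Finset.range N, r n) atTop atTop := by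
  refine tendsto_atTop_mono (fun N => ?_) (tendsto_natCast_atTop_atTop.atTop_mul_const hδ)
  simpa using Finset.sum_le_sum fun n (_ : n ∈ Finset.range N) => hr n

lemma exists_nonneg_hasSum_nat {δ : ℝ} (hδ : 0 < δ) {r c : ℕ → ℝ} (hr : ∀ n, δ ≤ r n)
    (hc : ∀ m, δ ≤ c m) :
    ∃ e : ℕ → ℕ → ℝ, (∀ n m, 0 ≤ e n m) ∧ (∀ n, HasSum (e n) (r n)) ∧
      (∀ m, HasSum (e · m) (c m)) := by
  set R : ℕ → ℝ := fun N => ∑ n ∈ Finset.range N, r n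
  set C : ℕ → ℝ := fun N => ∑ m ∈ Finset.range N, c m
  have hRmono : Monotone R := monotone_nat_of_le_succ fun n => by
    simpa [R, Finset.sum_range_succ] using hδ.le.trans (hr n)
  have hCmono : Monotone C := monotone_nat_of_le_succ fun m => by
    simpa [C, Finset.sum_range_succ] using hδ.le.trans (hc m)
  have hR0 : R 0 = 0 := Finset.sum_range_zero r
  have hC0 : C 0 = 0 := Finset.sum_range_zero c
  refine ⟨overlap R C, overlap_nonneg R C, fun n => ?_, fun m => ?_⟩
  · simpa [R, Finset.sum_range_succ] using hasSum_overlap (hRmono n.le_succ) hCmono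
      (hC0.trans hR0.symm ▸ hRmono n.zero_le) (tendsto_sum_range_atTop hδ hc)
  · simp_rw [overlap_comm R C _ m]
    simpa [C, Finset.sum_range_succ] using hasSum_overlap (hCmono m.le_succ) hRmono
      (hR0.trans hC0.symm ▸ hCmono m.zero_le) (tendsto_sum_range_atTop hδ hr)

lemma hasSum_ite_fst_eq {κ β : Type*} [DecidableEq κ] (k : κ) {f : κ × β → ℝ} {x : ℝ}
    (hf : HasSum (fun b => f (k, b)) x) :
    HasSum (fun q : κ × β => if q.1 = k then f q else 0) x := by
  refine ((Prod.mk_right_injective k).hasSum_iff fun q hq => if_neg ?_).1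
    (by simpa [Function.comp_def] using hf)
  rintro rfl
  exact hq ⟨q.2, rfl⟩

lemma exists_nonneg_hasSum [Infinite I] {δ : ℝ} (hδ : 0 < δ) {r c : I → ℝ}
    (hr : ∀ i, δ ≤ r i) (hc : ∀ j, δ ≤ c j) :
    ∃ E : I → I → ℝ, (∀ i j, 0 ≤ E i j) ∧ (∀ i, HasSum (E i) (r i)) ∧
      (∀ j, HasSum (E · j) (c j)) := by
  classical
  obtain ⟨eqv⟩ : Nonempty (I ≃ I × ℕ) := by
    rw [← Cardinal.eq, Cardinal.mk_prod, Cardinal.mk_nat, Cardinal.lift_aleph0,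
      Cardinal.lift_uzero, Cardinal.mul_aleph0_eq (Cardinal.aleph0_le_mk I)]
  choose e he0 herow hecol using fun k : I =>
    exists_nonneg_hasSum_nat hδ (fun n => hr (eqv.symm (k, n))) (fun n => hc (eqv.symm (k, n)))
  let F : I × ℕ → I × ℕ → ℝ := fun p q => if q.1 = p.1 then e p.1 p.2 q.2 else 0
  refine ⟨fun i j => F (eqv i) (eqv j), fun i j => ?_, fun i => ?_, fun j => ?_⟩
  · dsimp only [F]
    split_ifs
    exacts [he0 _ _ _, le_rfl]
  · refine (eqv.hasSum_iff (f := F (eqv i))).2 ?_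
    exact hasSum_ite_fst_eq _ (by simpa using herow (eqv i).1 (eqv i).2)
  · refine (eqv.hasSum_iff (f := fun p => F p (eqv j))).2 ?_
    simp_rw [F, eq_comm (a := (eqv j).1)]
    exact hasSum_ite_fst_eq _ (by simpa using hecol (eqv j).1 (eqv j).2)

end Marginals

end Majorization

open Majorization

section Substochastic

variable {I : Type*} {p : ℝ≥0∞} [Fact (1 ≤ p)] {D : Lp I p →L[ℝ] Lp I p}

lemma DoublySubstochastic.apply_stdVec_nonneg (hD : DoublySubstochastic D) (i j : I) :
    0 ≤ D (stdVec p j) i :=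
  hD.1 _ (stdVec_nonneg j) i

lemma DoublySubstochastic.hasSum_row (hD : DoublySubstochastic D) (i : I) :
    HasSum (fun j => D (stdVec p j) i) (∑' j, D (stdVec p j) i) :=
  (summable_of_sum_le (fun j => hD.apply_stdVec_nonneg i j) (hD.2.1 i)).hasSum

lemma DoublySubstochastic.hasSum_col (hD : DoublySubstochastic D) (j : I) :
    HasSum (fun i => D (stdVec p j) i) (∑' i, D (stdVec p j) i) :=
  (summable_of_sum_le (fun i => hD.apply_stdVec_nonneg i j) (hD.2.2 j)).hasSum

lemma DoublySubstochastic.tsum_row_le (hD : DoublySubstochastic D) (i : I) :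
    ∑' j, D (stdVec p j) i ≤ 1 :=
  (hD.hasSum_row i).summable.tsum_le_of_sum_le (hD.2.1 i)

lemma DoublySubstochastic.tsum_col_le (hD : DoublySubstochastic D) (j : I) :
    ∑' i, D (stdVec p j) i ≤ 1 :=
  (hD.hasSum_col j).summable.tsum_le_of_sum_le (hD.2.2 j)

lemma IncreasableDsS.doublySubstochastic (hD : IncreasableDsS D) : DoublySubstochastic D := by
  obtain ⟨hpos, A, ⟨hApos, hrow, hcol⟩, hle⟩ := hD
  have hA0 (i j : I) : 0 ≤ A (stdVec p j) i := hApos _ (stdVec_nonneg j) i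
  exact ⟨hpos,
    fun i s => (Finset.sum_le_sum fun j _ => hle i j).trans
      (sum_le_hasSum s (fun j _ => hA0 i j) (hrow i)),
    fun j s => (Finset.sum_le_sum fun i _ => hle i j).trans
      (sum_le_hasSum s (fun i _ => hA0 i j) (hcol j))⟩

lemma MajS.majW {f g : Lp I p} (h : MajS f g) : MajW f g :=
  let ⟨C, hC, hfC⟩ := h
  ⟨C, hC.doublySubstochastic, hfC⟩

end Substochastic

section EllOne

variable {I : Type*}

theorem DoublySubstochastic.increasableDsS_smul [Infinite I] {D : Lp I 1 →L[ℝ] Lp I 1}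
    (hD : DoublySubstochastic D) {τ : ℝ} (hτ0 : 0 ≤ τ) (hτ1 : τ < 1) :
    IncreasableDsS (τ • D) := by
  set d : I → I → ℝ := fun i j => D (stdVec 1 j) i
  obtain ⟨E, hE0, hErow, hEcol⟩ := exists_nonneg_hasSum (sub_pos.2 hτ1)
    (r := fun i => 1 - τ * ∑' j, d i j) (c := fun j => 1 - τ * ∑' i, d i j)
    (fun i => by nlinarith [hD.tsum_row_le i]) (fun j => by nlinarith [hD.tsum_col_le j])
  set a : I → I → ℝ := fun i j => τ * d i j + E i j
  have ha0 (i j : I) : 0 ≤ a i j :=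
    add_nonneg (mul_nonneg hτ0 (hD.apply_stdVec_nonneg i j)) (hE0 i j)
  have harow (i : I) : HasSum (a i) 1 := by
    simpa [a, d] using ((hD.hasSum_row i).mul_left τ).add (hErow i)
  have hacol (j : I) : HasSum (a · j) 1 := by
    simpa [a, d] using ((hD.hasSum_col j).mul_left τ).add (hEcol j)
  obtain ⟨A, hA⟩ := exists_clm_apply_eq_tsum ha0
    fun j s => sum_le_hasSum s (fun i _ => ha0 i j) (hacol j)
  have hAa := apply_stdVec_of_apply_eq_tsum hA
  refine ⟨fun f hf i => ?_, A, ⟨isPos_of_apply_eq_tsum ha0 hA, fun i => ?_, fun j => ?_⟩,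
    fun i j => ?_⟩
  · simpa using mul_nonneg hτ0 (hD.1 f hf i)
  · simpa only [hAa] using harow i
  · simpa only [hAa] using hacol j
  · simpa [hAa, a, d] using hE0 i j

theorem MajW.majS_smul [Infinite I] {f g : Lp I 1} (h : MajW f g) {τ : ℝ} (hτ0 : 0 ≤ τ)
    (hτ1 : τ < 1) : MajS (τ • f) g :=
  let ⟨D, hD, hfD⟩ := h
  ⟨τ • D, hD.increasableDsS_smul hτ0 hτ1, by rw [hfD]; rfl⟩

theorem majW_of_tendsto {ι : Type*} {l : Filter ι} [l.NeBot] {x y : Lp I 1} {xs : ι → Lp I 1}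
    (hxs : ∀ i, Tendsto (fun n => xs n i) l (𝓝 (x i))) (h : ∀ n, MajW (xs n) y) :
    MajW x y := by
  choose C hC hxC using h
  set U := Ultrafilter.of l
  have hlim (i j : I) :
      ∃ m ∈ Set.Icc (0 : ℝ) 1, Tendsto (fun n => C n (stdVec 1 j) i) U (𝓝 m) :=
    isCompact_Icc.ultrafilter_le_nhds' (U.map _) <| Ultrafilter.mem_map.2 <|
      univ_mem' fun n => ⟨(hC n).apply_stdVec_nonneg i j, by simpa using (hC n).2.1 i {j}⟩
  choose m hm hCm using hlim
  have hrow (i : I) (s : Finset I) : ∑ j ∈ s, m i j ≤ 1 :=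
    le_of_tendsto' (tendsto_finsetSum s fun j _ => hCm i j) fun n => (hC n).2.1 i s
  have hcol (j : I) (s : Finset I) : ∑ i ∈ s, m i j ≤ 1 :=
    le_of_tendsto' (tendsto_finsetSum s fun i _ => hCm i j) fun n => (hC n).2.2 j s
  have hbound (n : ι) (i j : I) : ‖C n (stdVec 1 j) i * y j‖ ≤ ‖y j‖ := by
    rw [norm_mul, Real.norm_of_nonneg ((hC n).apply_stdVec_nonneg i j)]
    exact mul_le_of_le_one_left (norm_nonneg _) (by simpa using (hC n).2.1 i {j})
  have hmy (i : I) : ∑' j, m i j * y j = x i := by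
    have hdom := tendsto_tsum_of_dominated_convergence (summable_norm y)
      (fun j => (hCm i j).mul_const (y j)) (Eventually.of_forall (hbound · i))
    refine tendsto_nhds_unique hdom <|
      ((hxs i).mono_left (Ultrafilter.of_le l)).congr fun n => ?_
    rw [hxC n, ← (hasSum_mul_apply_stdVec (by norm_num) (C n) y i).tsum_eq]
    simp_rw [mul_comm]
  obtain ⟨M, hM⟩ := exists_clm_apply_eq_tsum (fun i j => (hm i j).1) hcol
  have hMm := apply_stdVec_of_apply_eq_tsum hM
  refine ⟨M, ⟨isPos_of_apply_eq_tsum (fun i j => (hm i j).1) hM, fun i s => ?_,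
    fun j s => ?_⟩, lp.ext <| funext fun i => ((hM y i).trans (hmy i)).symm⟩
  · simpa only [hMm] using hrow i s
  · simpa only [hMm] using hcol j s

end EllOne

theorem stmt_18 {I : Type*} [Infinite I]
    (T : Lp I 1 →L[ℝ] Lp I 1) (hT : PreservesMajS T) :
    PreservesMajW T := by
  intro f g hf hg hfg
  have hτ0 (n : ℕ) : (0 : ℝ) ≤ n / (n + 1) := by positivity
  have hτ1 (n : ℕ) : (n : ℝ) / (n + 1) < 1 := (div_lt_one (by positivity)).2 (by linarith)
  have hmaj (n : ℕ) : MajW (((n : ℝ) / (n + 1)) • T f) (T g) := by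
    have hfn : ∀ i, 0 ≤ (((n : ℝ) / (n + 1)) • f) i := fun i => by
      simpa using mul_nonneg (hτ0 n) (hf i)
    simpa using (hT _ g hfn hg (hfg.majS_smul (hτ0 n) (hτ1 n))).majW
  refine majW_of_tendsto (l := atTop) (fun i => ?_) hmaj
  simpa using (tendsto_natCast_div_add_atTop (1 : ℝ)).mul_const (T f i)
end
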